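/- Let λ, μ, A, B be real numbers and ξ¹, ξ² ∈ ℝ³, set ξ^S = ξ¹ + ξ², and let h(w, p) be the P–S interaction symbol scalar. Let ξ^V ∈ ℝ³ be a unit vector with ξ^V·ξ¹ = 0 and ξ^V·ξ² = 0. Then h(ξ^V, ξ^V) = (λ + B)·|ξ¹|²·(ξ²·ξ^S) + (2μ + A/2)·(ξ¹·ξ²)·(ξ¹·ξ^S). (The SV→SV component of the symbol generated by the interaction of a P wave and an S wave polarized perpendicular to the interaction plane; it is generically nonvanishing exactly when λ + B ≠ 0 or 2μ + A/2 ≠ 0.) -/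

import Mathlib

/-- Euclidean dot product on ℝ³. -/
def dot (x y : Fin 3 → ℝ) : ℝ := ∑ i, x i * y i

/-- The P–S interaction symbol scalar h(w, p) for a P wave with covector ξ¹ and an
S wave with covector ξ² and polarization p, tested in output direction w. -/
noncomputable def hPS (lam mu A B : ℝ) (ξ1 ξ2 w p : Fin 3 → ℝ) : ℝ :=
  lam * (dot ξ1 ξ1 * dot w p * dot ξ2 (ξ1 + ξ2)
      + dot ξ1 p * dot ξ1 ξ2 * dot w (ξ1 + ξ2))
    + 2 * mu * (dot w p * dot ξ1 ξ2 * dot ξ1 (ξ1 + ξ2))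
    + mu * (dot ξ1 w * dot ξ1 p * dot ξ2 (ξ1 + ξ2))
    + mu * (dot ξ1 w * dot ξ1 ξ2 * dot p (ξ1 + ξ2)
      + dot ξ1 w * dot ξ1 p * dot ξ2 (ξ1 + ξ2)
      + dot ξ2 w * dot ξ1 p * dot ξ1 (ξ1 + ξ2))
    + (A / 2) * (dot ξ1 w * dot ξ1 ξ2 * dot p (ξ1 + ξ2)
      + dot ξ1 w * dot ξ1 p * dot ξ2 (ξ1 + ξ2)
      + dot p w * dot ξ1 ξ2 * dot ξ1 (ξ1 + ξ2)
      + dot ξ2 w * dot p ξ1 * dot ξ1 (ξ1 + ξ2))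
    + B * (dot ξ1 ξ1 * dot w p * dot ξ2 (ξ1 + ξ2)
      + dot ξ1 ξ1 * dot p (ξ1 + ξ2) * dot ξ2 w
      + 2 * dot ξ1 p * dot ξ1 ξ2 * dot w (ξ1 + ξ2))

lemma dot_comm (x y : Fin 3 → ℝ) : dot x y = dot y x := dotProduct_comm x y

lemma dot_add (x y z : Fin 3 → ℝ) : dot x (y + z) = dot x y + dot x z := dotProduct_add x y z

lemma hPS_of_orthogonal (lam mu A B : ℝ) (ξ1 ξ2 w p : Fin 3 → ℝ)
    (hw1 : dot w ξ1 = 0) (hw2 : dot w ξ2 = 0) (hp1 : dot p ξ1 = 0) (hp2 : dot p ξ2 = 0) :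
    hPS lam mu A B ξ1 ξ2 w p =
      dot w p * ((lam + B) * dot ξ1 ξ1 * dot ξ2 (ξ1 + ξ2)
        + (2 * mu + A / 2) * dot ξ1 ξ2 * dot ξ1 (ξ1 + ξ2)) := by
  have h1w : dot ξ1 w = 0 := by rw [dot_comm, hw1]
  have h2w : dot ξ2 w = 0 := by rw [dot_comm, hw2]
  have h1p : dot ξ1 p = 0 := by rw [dot_comm, hp1]
  rw [hPS, dot_add w, dot_add p, hw1, hw2, hp1, hp2, h1w, h2w, h1p, dot_comm p w]
  ring

/-- The SV→SV component of the symbol generated by the interaction of a P wave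
and an S wave polarized perpendicular to the interaction plane. -/
theorem ps_interaction_SV_SV (lam mu A B : ℝ) (ξ1 ξ2 ξV : Fin 3 → ℝ)
    (hVunit : dot ξV ξV = 1) (hV1 : dot ξV ξ1 = 0) (hV2 : dot ξV ξ2 = 0) :
    hPS lam mu A B ξ1 ξ2 ξV ξV =
      (lam + B) * dot ξ1 ξ1 * dot ξ2 (ξ1 + ξ2)
        + (2 * mu + A / 2) * dot ξ1 ξ2 * dot ξ1 (ξ1 + ξ2) := by
  rw [hPS_of_orthogonal lam mu A B ξ1 ξ2 ξV ξV hV1 hV2 hV1 hV2, hVunit, one_mul]
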